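/- arXiv:0805.1773 — 6 statements merged into one kernel-verified Lean document; each statement's English description precedes it below -/
import Mathlib

section
/- If φ is slowly varying at 0 (i.e. φ(ct)/φ(t) → 1 as t → 0+ for every c > 0) and φ is nonnegative and locally integrable on (0,1], then for any c > 0, ∫₀^{cx} φ(t) dt / ∫₀^{x} φ(t) dt → c as x → 0+ (assuming the integrals are finite and positive for small x). -/
open Filter MeasureTheory Set intervalIntegral Topology

/-!
Substituting `t ↦ c t` gives `∫₀^{cx} φ = c ∫₀^x φ(c·)`, so it suffices that
`∫₀^x φ(c·) / ∫₀^x φ → 1`. Near `0⁺` slow variation says `|φ(ct) - φ(t)| ≤ ε φ(t)` pointwise,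
and since `φ ≥ 0` this integrates to `|∫₀^x φ(c·) - ∫₀^x φ| ≤ ε ∫₀^x φ`.
-/

lemma Filter.Eventually.forall_Ioc_nhdsGT {α : Type*} [LinearOrder α] [TopologicalSpace α]
    [OrderTopology α] [NoMaxOrder α] [DenselyOrdered α] {a : α} {p : α → Prop}
    (h : ∀ᶠ t in 𝓝[>] a, p t) : ∀ᶠ x in 𝓝[>] a, ∀ t ∈ Ioc a x, p t := by
  obtain ⟨u, hau, hu⟩ := mem_nhdsGT_iff_exists_Ioc_subset.mp h
  filter_upwards [Ioo_mem_nhdsGT hau] with x hx t ht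
  exact hu ⟨ht.1, ht.2.trans hx.2.le⟩

lemma abs_div_sub_le_iff {a b l δ : ℝ} (hb : 0 < b) :
    |a / b - l| ≤ δ ↔ |a - l * b| ≤ δ * b := by
  rw [div_sub' hb.ne', abs_div, abs_of_pos hb, div_le_iff₀ hb, mul_comm b]

lemma abs_integral_sub_mul_integral_le {f g : ℝ → ℝ} {a x l δ : ℝ} (hax : a ≤ x)
    (hf : IntervalIntegrable f volume a x) (hg : IntervalIntegrable g volume a x)
    (hbound : ∀ t ∈ Ioc a x, |g t - l * f t| ≤ δ * f t) :
    |(∫ t in a..x, g t) - l * ∫ t in a..x, f t| ≤ δ * ∫ t in a..x, f t := by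
  rw [← intervalIntegral.integral_const_mul, ← intervalIntegral.integral_const_mul,
    ← integral_sub hg (hf.const_mul l), ← Real.norm_eq_abs]
  refine norm_integral_le_of_norm_le hax (ae_of_all _ fun t ht => ?_) (hf.const_mul δ)
  simpa only [Real.norm_eq_abs] using hbound t ht

theorem tendsto_integral_div_integral_nhdsGT {f g : ℝ → ℝ} {a l : ℝ}
    (hf_pos : ∀ᶠ t in 𝓝[>] a, 0 < f t)
    (hgf : Tendsto (fun t => g t / f t) (𝓝[>] a) (𝓝 l))
    (hf : ∀ᶠ x in 𝓝[>] a, IntervalIntegrable f volume a x)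
    (hg : ∀ᶠ x in 𝓝[>] a, IntervalIntegrable g volume a x)
    (hF_pos : ∀ᶠ x in 𝓝[>] a, 0 < ∫ t in a..x, f t) :
    Tendsto (fun x => (∫ t in a..x, g t) / ∫ t in a..x, f t) (𝓝[>] a) (𝓝 l) := by
  refine Metric.tendsto_nhds.mpr fun ε hε => ?_
  have hpointwise : ∀ᶠ t in 𝓝[>] a, |g t - l * f t| ≤ ε / 2 * f t := by
    filter_upwards [hf_pos, Metric.tendsto_nhds.mp hgf (ε / 2) (half_pos hε)] with t hft hdist
    exact (abs_div_sub_le_iff hft).mp hdist.le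
  filter_upwards [hpointwise.forall_Ioc_nhdsGT, hf, hg, hF_pos, self_mem_nhdsWithin]
    with x hbound hfx hgx hFx hax
  have hclose := abs_integral_sub_mul_integral_le (le_of_lt hax) hfx hgx hbound
  exact ((abs_div_sub_le_iff hFx).mpr hclose).trans_lt (half_lt_self hε)

/-- If φ is slowly varying at 0, nonnegative and locally integrable on (0,1],
with positive finite integrals near 0, then ∫₀^{cx} φ / ∫₀^x φ → c as x → 0+. -/
theorem slowly_varying_integral_ratio
    (φ : ℝ → ℝ)
    (hnonneg : ∀ t ∈ Ioc (0:ℝ) 1, 0 ≤ φ t)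
    (hsv : ∀ c > (0:ℝ), Tendsto (fun t => φ (c * t) / φ t) (nhdsWithin 0 (Ioi 0)) (nhds 1))
    (hint : ∀ x ∈ Ioc (0:ℝ) 1, IntervalIntegrable φ volume 0 x)
    (hpos : ∀ᶠ x in nhdsWithin (0:ℝ) (Ioi 0), 0 < ∫ t in (0:ℝ)..x, φ t) :
    ∀ c > (0:ℝ),
      Tendsto (fun x => (∫ t in (0:ℝ)..(c * x), φ t) / ∫ t in (0:ℝ)..x, φ t)
        (nhdsWithin 0 (Ioi 0)) (nhds c) := by
  intro c hc
  have hsmall : ∀ᶠ t in 𝓝[>] (0:ℝ), t ∈ Ioc 0 1 := Ioc_mem_nhdsGT zero_lt_one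
  have hφ_pos : ∀ᶠ t in 𝓝[>] (0:ℝ), 0 < φ t := by
    filter_upwards [hsmall, (hsv c hc).eventually_ne one_ne_zero] with t ht hne
    -- `φ t = 0` would make the ratio `0`
    exact (hnonneg t ht).lt_of_ne' fun h0 => hne (by rw [h0, div_zero])
  have hφ_int : ∀ᶠ x in 𝓝[>] (0:ℝ), IntervalIntegrable φ volume 0 x :=
    hsmall.mono hint
  have hφc_int : ∀ᶠ x in 𝓝[>] (0:ℝ), IntervalIntegrable (fun t => φ (c * t)) volume 0 x := by
    filter_upwards [eventually_nhdsGT_zero_mul_left hc hφ_int] with x hx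
    simpa [hc.ne'] using hx.comp_mul_left (c := c)
  have hsubst : ∀ x, (∫ t in (0:ℝ)..(c * x), φ t) = c * ∫ t in (0:ℝ)..x, φ (c * t) := by
    intro x
    have := smul_integral_comp_mul_left (a := 0) (b := x) φ c
    rwa [mul_zero, smul_eq_mul, eq_comm] at this
  simpa only [hsubst, mul_div_assoc, mul_one] using
    (tendsto_integral_div_integral_nhdsGT hφ_pos (hsv c hc) hφ_int hφc_int hpos).const_mul c
end

section
/- Let (λ_n) be a positive summable sequence with λ_n ≤ 1 and counting function N with N(λ) → ∞ as λ → 0+. Then u · Σ_n λ_n/(1+2uλ_n) ≥ (1/3) N(1/u) for all u ≥ 1, and hence u·Σ_n λ_n/(1+2uλ_n) → ∞ as u → ∞. -/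
open Filter MeasureTheory Set

/-! Each index with `λ_n > 1/u` contributes at least `1/(3u)` to `Σ_n λ_n/(1+2uλ_n)`, since
`x/(1+2ux) ≥ 1/(3u)` as soon as `ux ≥ 1`; so `u` times the sum is at least `N(1/u)/3`.
As `u → ∞`, `1/u → 0+` and `N(1/u) → ∞`. -/

/-- An infinite `s` has `ncard = 0`, so no finiteness assumption is needed. -/
lemma mul_ncard_le_tsum {ι : Type*} {f : ι → ℝ} (hf : Summable f) (hf0 : ∀ i, 0 ≤ f i)
    {s : Set ι} {c : ℝ} (hc : ∀ i ∈ s, c ≤ f i) : c * s.ncard ≤ ∑' i, f i := by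
  rcases s.finite_or_infinite with hs | hs
  · calc c * s.ncard = hs.toFinset.card • c := by
          rw [Set.ncard_eq_toFinset_card s hs, nsmul_eq_mul, mul_comm]
      _ ≤ ∑ i ∈ hs.toFinset, f i :=
          Finset.card_nsmul_le_sum _ _ _ fun i hi => hc i (hs.mem_toFinset.mp hi)
      _ ≤ ∑' i, f i := hf.sum_le_tsum _ fun i _ => hf0 i
  · rw [hs.ncard, Nat.cast_zero, mul_zero]
    exact tsum_nonneg hf0

lemma one_div_three_mul_le_div_one_add_two_mul {u x : ℝ} (hu : 0 < u) (hx : 1 ≤ u * x) :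
    1 / (3 * u) ≤ x / (1 + 2 * u * x) := by
  rw [div_le_div_iff₀ (by positivity) (by linarith)]
  linarith

lemma ncard_lt_le_mul_tsum {ι : Type*} {l : ι → ℝ} (hl0 : ∀ i, 0 ≤ l i) (hl : Summable l)
    {u : ℝ} (hu : 0 < u) :
    (1 / 3) * {i | 1 / u < l i}.ncard ≤ u * ∑' i, l i / (1 + 2 * u * l i) := by
  have hden : ∀ i, 0 < 1 + 2 * u * l i := fun i => by have := hl0 i; positivity
  have hsum : Summable fun i => l i / (1 + 2 * u * l i) :=
    hl.of_nonneg_of_le (fun i => div_nonneg (hl0 i) (hden i).le)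
      fun i => div_le_self (hl0 i) (by nlinarith [hl0 i])
  have hbig : ∀ i ∈ {i | 1 / u < l i}, 1 / (3 * u) ≤ l i / (1 + 2 * u * l i) := fun i hi =>
    one_div_three_mul_le_div_one_add_two_mul hu ((div_le_iff₀' hu).mp (le_of_lt hi))
  calc (1 / 3) * ({i | 1 / u < l i}.ncard : ℝ)
      = u * (1 / (3 * u) * {i | 1 / u < l i}.ncard) := by field_simp
    _ ≤ u * ∑' i, l i / (1 + 2 * u * l i) :=
        mul_le_mul_of_nonneg_left
          (mul_ncard_le_tsum hsum (fun i => div_nonneg (hl0 i) (hden i).le) hbig) hu.le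

theorem sum_lower_bound_counting_general
    (l : ℕ → ℝ) (hpos : ∀ n, 0 < l n)
    (hsum : Summable l)
    (N : ℝ → ℝ) (hN : ∀ t, N t = (Nat.card {n : ℕ | t < l n} : ℝ))
    (hNinf : Tendsto N (nhdsWithin 0 (Ioi 0)) atTop) :
    (∀ u ≥ (1:ℝ), (1/3) * N (1/u) ≤ u * ∑' n, l n / (1 + 2 * u * l n)) ∧
    Tendsto (fun u => u * ∑' n, l n / (1 + 2 * u * l n)) atTop atTop := by
  have key : ∀ u > (0:ℝ), (1/3) * N (1/u) ≤ u * ∑' n, l n / (1 + 2 * u * l n) := fun u hu => by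
    rw [hN, Nat.card_coe_set_eq]
    exact ncard_lt_le_mul_tsum (fun n => (hpos n).le) hsum hu
  refine ⟨fun u hu => key u (by linarith), ?_⟩
  have hN_inv : Tendsto (fun u : ℝ => (1/3) * N (1/u)) atTop atTop := by
    have hinv : Tendsto (fun u : ℝ => 1/u) atTop (nhdsWithin 0 (Ioi 0)) := by
      simpa only [one_div] using tendsto_inv_atTop_nhdsGT_zero
    exact (hNinf.comp hinv).const_mul_atTop (by norm_num)
  exact tendsto_atTop_mono' _ ((eventually_gt_atTop 0).mono key) hN_inv

/-- For a positive summable sequence (λ_n) with λ_n ≤ 1 and counting function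
N(t) = #{n : λ_n > t} with N(t) → ∞ as t → 0+, one has
u · Σ_n λ_n/(1+2uλ_n) ≥ (1/3) N(1/u) for u ≥ 1, and u · Σ_n λ_n/(1+2uλ_n) → ∞. -/
theorem sum_lower_bound_counting
    (l : ℕ → ℝ) (hpos : ∀ n, 0 < l n) (hle : ∀ n, l n ≤ 1)
    (hsum : Summable l)
    (N : ℝ → ℝ) (hN : ∀ t, N t = (Nat.card {n : ℕ | t < l n} : ℝ))
    (hNinf : Tendsto N (nhdsWithin 0 (Ioi 0)) atTop) :
    (∀ u ≥ (1:ℝ), (1/3) * N (1/u) ≤ u * ∑' n, l n / (1 + 2 * u * l n)) ∧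
    Tendsto (fun u => u * ∑' n, l n / (1 + 2 * u * l n)) atTop atTop :=
  sum_lower_bound_counting_general l hpos hsum N hN hNinf
end

section
/- Let N : (0,1] → [0,∞) be nondecreasing with M(λ) = ∫₀^λ N(t) dt finite, and suppose that for every h > 1, liminf_{x→0+} M(hx)/M(x) > 1. Then for every h > 1 there exists δ > 0 such that for all sufficiently large u, ∫₀^u M(t/u)(1+2t)^{-3} dt / ∫₀^u M(t/(hu))(1+2t)^{-3} dt ≥ 1 + δ. -/
open Filter MeasureTheory Set Topology

/-!
Since `N` is nondecreasing, the substitution `s ↦ h s` gives `h M(x) ≤ M(h x)` whenever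
`0 < x` and `h x ≤ 1` (`M` is convex with `M(0) = 0`). Applied at `x = t / (h u)` under the
integral this yields the claim with `δ = h - 1`. Condition (1.4) forces `M > 0` on `(0, 1]`,
so the denominator is positive.
-/

theorem MonotoneOn.mul_integral_le_integral_mul {N : ℝ → ℝ} {b h x : ℝ}
    (hmono : MonotoneOn N (Ioc 0 b)) (hint : IntervalIntegrable N volume 0 b)
    (hh : 1 ≤ h) (hx : 0 ≤ x) (hhx : h * x ≤ b) :
    h * ∫ s in 0..x, N s ≤ ∫ s in 0..h * x, N s := by
  have hh0 : 0 < h := one_pos.trans_le hh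
  have hxhx : x ≤ h * x := le_mul_of_one_le_left hx hh
  have hint' : IntervalIntegrable N volume 0 (h * x) :=
    hint.mono_set (uIcc_subset_uIcc_left (mem_uIcc_of_le (hx.trans hxhx) hhx))
  have hintx : IntervalIntegrable N volume 0 x :=
    hint'.mono_set (uIcc_subset_uIcc_left (mem_uIcc_of_le hx hxhx))
  have hcomp : IntervalIntegrable (fun s => N (h * s)) volume 0 x := by
    simpa [hh0.ne'] using hint'.comp_mul_left (c := h)
  calc h * ∫ s in 0..x, N s ≤ h * ∫ s in 0..x, N (h * s) := by
        gcongr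
        refine intervalIntegral.integral_mono_on_of_le_Ioo hx hintx hcomp fun s hs => ?_
        have hhs : s ≤ h * s := le_mul_of_one_le_left hs.1.le hh
        exact hmono ⟨hs.1, hs.2.le.trans (hxhx.trans hhx)⟩
          ⟨hs.1.trans_le hhs, (mul_le_mul_of_nonneg_left hs.2.le hh0.le).trans hhx⟩ hhs
    _ = ∫ s in 0..h * x, N s := by
        rw [intervalIntegral.integral_comp_mul_left _ hh0.ne', mul_zero, smul_eq_mul,
          mul_inv_cancel_left₀ hh0.ne']

theorem Filter.frequently_ne_zero_of_one_lt_liminf_div {α : Type*} {l : Filter α} [l.NeBot]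
    {f g : α → ℝ} (hlim : 1 < liminf (fun x => g x / f x) l) : ∃ᶠ x in l, f x ≠ 0 := by
  by_contra hfreq
  have hzero : (fun x => g x / f x) =ᶠ[l] fun _ => 0 := by
    filter_upwards [not_frequently.mp hfreq] with x hx
    rw [not_not.mp hx, div_zero]
  rw [liminf_congr hzero, liminf_const] at hlim
  exact zero_lt_one.not_gt hlim

theorem intervalIntegral_pos_of_frequently_ne_zero {N : ℝ → ℝ} {b y : ℝ}
    (hnonneg : ∀ t ∈ Ioc 0 b, 0 ≤ N t) (hint : IntervalIntegrable N volume 0 b)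
    (hfreq : ∃ᶠ x in 𝓝[>] 0, ∫ s in 0..x, N s ≠ 0) (hy : y ∈ Ioc 0 b) :
    0 < ∫ s in 0..y, N s := by
  obtain ⟨x, hx0, hx⟩ := (hfreq.and_eventually (Ioo_mem_nhdsGT hy.1)).exists
  have hae : 0 ≤ᵐ[volume.restrict (Ioc 0 y)] N :=
    ae_restrict_of_forall_mem measurableSet_Ioc fun t ht =>
      hnonneg t ⟨ht.1, ht.2.trans hy.2⟩
  have hiy : IntervalIntegrable N volume 0 y :=
    hint.mono_set (uIcc_subset_uIcc_left (mem_uIcc_of_le hy.1.le hy.2))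
  have hPx : 0 ≤ ∫ s in 0..x, N s := by
    rw [intervalIntegral.integral_of_le hx.1.le]
    exact setIntegral_nonneg measurableSet_Ioc fun t ht =>
      hnonneg t ⟨ht.1, ht.2.trans (hx.2.le.trans hy.2)⟩
  calc 0 < ∫ s in 0..x, N s := hPx.lt_of_ne' hx0
    _ ≤ ∫ s in 0..y, N s :=
      intervalIntegral.integral_mono_interval le_rfl hx.1.le hx.2.le hae hiy

section WeightedIntegral

variable {P w : ℝ → ℝ} {u c : ℝ}

theorem intervalIntegrable_comp_div_div (hP : ContinuousOn P (Icc 0 1))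
    (hw : ContinuousOn w (Icc 0 u)) (hw0 : ∀ t ∈ Icc 0 u, w t ≠ 0) (hu : 0 < u)
    (huc : u ≤ c) :
    IntervalIntegrable (fun t => P (t / c) / w t) volume 0 u := by
  have hc : 0 < c := hu.trans_le huc
  refine ContinuousOn.intervalIntegrable ?_
  rw [uIcc_of_le hu.le]
  refine (hP.comp (continuousOn_id.div_const c) fun t ht => ?_).div hw hw0
  exact ⟨div_nonneg ht.1 hc.le, (div_le_one hc).mpr (ht.2.trans huc)⟩

theorem integral_comp_div_div_congr {M : ℝ → ℝ} (hMP : EqOn M P (Ioc 0 1)) (hu : 0 < u)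
    (huc : u ≤ c) :
    ∫ t in 0..u, M (t / c) / w t = ∫ t in 0..u, P (t / c) / w t := by
  have hc : 0 < c := hu.trans_le huc
  refine intervalIntegral.integral_congr_ae (ae_of_all _ fun t ht => ?_)
  rw [uIoc_of_le hu.le] at ht
  rw [hMP ⟨div_pos ht.1 hc, (div_le_one hc).mpr (ht.2.trans huc)⟩]

theorem integral_comp_div_div_pos (hP : ContinuousOn P (Icc 0 1))
    (hPpos : ∀ y ∈ Ioc 0 1, 0 < P y) (hw : ContinuousOn w (Icc 0 u))
    (hw0 : ∀ t ∈ Icc 0 u, 0 < w t) (hu : 0 < u) (huc : u ≤ c) :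
    0 < ∫ t in 0..u, P (t / c) / w t := by
  have hc : 0 < c := hu.trans_le huc
  refine intervalIntegral.intervalIntegral_pos_of_pos_on
    (intervalIntegrable_comp_div_div hP hw (fun t ht => (hw0 t ht).ne') hu huc)
    (fun t ht => div_pos (hPpos _ ⟨div_pos ht.1 hc, ?_⟩) (hw0 t (Ioo_subset_Icc_self ht))) hu
  exact (div_le_one hc).mpr (ht.2.le.trans huc)

theorem mul_integral_comp_div_mul_div_le {h : ℝ} (hP : ContinuousOn P (Icc 0 1))
    (hscale : ∀ x, 0 < x → h * x ≤ 1 → h * P x ≤ P (h * x))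
    (hw : ContinuousOn w (Icc 0 u)) (hw0 : ∀ t ∈ Icc 0 u, 0 < w t) (hh : 1 ≤ h) (hu : 0 < u) :
    h * ∫ t in 0..u, P (t / (h * u)) / w t ≤ ∫ t in 0..u, P (t / u) / w t := by
  have hw0' : ∀ t ∈ Icc 0 u, w t ≠ 0 := fun t ht => (hw0 t ht).ne'
  rw [← intervalIntegral.integral_const_mul]
  refine intervalIntegral.integral_mono_on_of_le_Ioo hu.le
    ((intervalIntegrable_comp_div_div hP hw hw0' hu (le_mul_of_one_le_left hu.le hh)).const_mul h)
    (intervalIntegrable_comp_div_div hP hw hw0' hu le_rfl) fun t ht => ?_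
  have hth : h * (t / (h * u)) = t / u := by field_simp [(one_pos.trans_le hh).ne']
  have hPt := hscale (t / (h * u)) (div_pos ht.1 (by positivity))
    (by rw [hth, div_le_one hu]; exact ht.2.le)
  rw [hth] at hPt
  rw [mul_div_assoc']
  exact div_le_div_of_nonneg_right hPt (hw0 t (Ioo_subset_Icc_self ht)).le

end WeightedIntegral

/-- If M(λ) = ∫₀^λ N with N nondecreasing nonnegative, and liminf_{x→0+} M(hx)/M(x) > 1
for every h > 1, then for every h > 1 there is δ > 0 such that for large u,
∫₀^u M(t/u)(1+2t)⁻³ dt / ∫₀^u M(t/(hu))(1+2t)⁻³ dt ≥ 1 + δ. -/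
theorem ratio_integrals_ge_one_add_delta
    (N : ℝ → ℝ)
    (hmono : MonotoneOn N (Ioc (0:ℝ) 1))
    (hnonneg : ∀ t ∈ Ioc (0:ℝ) 1, 0 ≤ N t)
    (hint : IntervalIntegrable N volume 0 1)
    (M : ℝ → ℝ) (hM : ∀ t ∈ Ioc (0:ℝ) 1, M t = ∫ s in (0:ℝ)..t, N s)
    (h14 : ∀ h > (1:ℝ), 1 < Filter.liminf (fun x => M (h * x) / M x)
        (nhdsWithin (0:ℝ) (Ioi 0))) :
    ∀ h > (1:ℝ), ∃ δ > (0:ℝ), ∀ᶠ u in atTop,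
      1 + δ ≤ (∫ t in (0:ℝ)..u, M (t / u) / (1 + 2 * t) ^ 3) /
        (∫ t in (0:ℝ)..u, M (t / (h * u)) / (1 + 2 * t) ^ 3) := by
  intro h hh
  set P : ℝ → ℝ := fun y => ∫ s in (0:ℝ)..y, N s
  have hMP : EqOn M P (Ioc 0 1) := hM
  have hPcont : ContinuousOn P (Icc 0 1) := by
    simpa [uIcc_of_le zero_le_one] using
      intervalIntegral.continuousOn_primitive_interval' hint left_mem_uIcc
  have hPpos : ∀ y ∈ Ioc (0:ℝ) 1, 0 < P y := by
    refine fun y => intervalIntegral_pos_of_frequently_ne_zero hnonneg hint ?_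
    refine ((frequently_ne_zero_of_one_lt_liminf_div (h14 h hh)).and_eventually
      (Ioo_mem_nhdsGT zero_lt_one)).mono fun x ⟨hMx, hx⟩ => ?_
    rwa [hMP ⟨hx.1, hx.2.le⟩] at hMx
  have hscale : ∀ x, 0 < x → h * x ≤ 1 → h * P x ≤ P (h * x) := fun x hx hhx =>
    hmono.mul_integral_le_integral_mul hint hh.le hx.le hhx
  refine ⟨h - 1, by linarith, ?_⟩
  filter_upwards [eventually_gt_atTop 0] with u hu
  have hw : ContinuousOn (fun t : ℝ => (1 + 2 * t) ^ 3) (Icc 0 u) := by fun_prop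
  have hw0 : ∀ t ∈ Icc 0 u, 0 < (1 + 2 * t) ^ 3 := fun t ht => by have := ht.1; positivity
  have hhu : u ≤ h * u := le_mul_of_one_le_left hu.le hh.le
  rw [integral_comp_div_div_congr hMP hu le_rfl, integral_comp_div_div_congr hMP hu hhu,
    add_sub_cancel, le_div_iff₀ (integral_comp_div_div_pos hPcont hPpos hw hw0 hu hhu)]
  exact mul_integral_comp_div_mul_div_le hPcont hscale hw hw0 hh.le hu
end

section
/- Let (λ_n) be a positive summable sequence with λ_n ≤ 1, counting function N(λ) → ∞ as λ → 0+, and L(u) = -(1/2) Σ_n ln(1+2uλ_n). Then L(u) - u L'(u) = -2u² ∫₀^1 N(λ) λ (1+2uλ)^{-2} dλ, and |L(u) - u L'(u)| ≥ 2 ∫₀^1 N(t/u) t (1+2t)^{-2} dt → ∞ as u → ∞. -/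
/-!
Write `N t * g t = ∑' n, 1[t < λ n] * g t`. Integrating over `(0, 1]` and exchanging sum and
integral gives `∫₀¹ N g = ∑' n, ∫₀^{λ n} g`, and for `g t = t / (1 + 2 u t)²` the fundamental
theorem of calculus identifies `-2u²` times the `n`-th term with the `n`-th term
`u λ n / (1 + 2 u λ n) - ½ log (1 + 2 u λ n)` of `L u - u L' u`. The substitution `t = u s` turns
`∫₀¹ N (t / u) t (1 + 2t)⁻² dt` into `u²` times the same integrand over `(0, 1/u]`, which is at most
the integral over `(0, 1]`, and at least `N (1/u) ∫₀¹ t (1 + 2t)⁻² dt` because `N` is antitone.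
-/

open Filter MeasureTheory Set

noncomputable def countAbove (l : ℕ → ℝ) (t : ℝ) : ℝ := Nat.card {n : ℕ | t < l n}

noncomputable def logLaplace (l : ℕ → ℝ) (u : ℝ) : ℝ := -(1/2) * ∑' n, Real.log (1 + 2 * u * l n)

noncomputable def logLaplaceDeriv (l : ℕ → ℝ) (u : ℝ) : ℝ := -∑' n, l n / (1 + 2 * u * l n)

theorem setIntegral_Ioc_indicator_Iio {a b c : ℝ} (hca : c ≤ a) (hab : a ≤ b) (g : ℝ → ℝ) :
    ∫ t in Ioc c b, (Iio a).indicator g t = ∫ t in c..a, g t := by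
  have hset : Iio a ∩ Ioc c b = Ioo c a := by
    ext t
    simp only [mem_inter_iff, mem_Iio, mem_Ioc, mem_Ioo]
    constructor
    · rintro ⟨hta, hct, -⟩; exact ⟨hct, hta⟩
    · rintro ⟨hct, hta⟩; exact ⟨hta, hct, hta.le.trans hab⟩
  rw [integral_indicator measurableSet_Iio, Measure.restrict_restrict measurableSet_Iio, hset,
    ← integral_Ioc_eq_integral_Ioo, intervalIntegral.integral_of_le hca]

section CountAbove

variable {l : ℕ → ℝ}

theorem countAbove_nonneg (l : ℕ → ℝ) (t : ℝ) : 0 ≤ countAbove l t := Nat.cast_nonneg _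

theorem finite_setOf_lt_of_summable (hsum : Summable l) {t : ℝ} (ht : 0 < t) :
    {n | t < l n}.Finite :=
  (Filter.eventually_cofinite.1 (hsum.tendsto_cofinite_zero.eventually (gt_mem_nhds ht))).subset
    fun _ hn => not_lt.2 (le_of_lt hn)

theorem countAbove_antitoneOn (hsum : Summable l) : AntitoneOn (countAbove l) (Ioi 0) :=
  fun s hs t _ hst => by
    simp only [countAbove, Nat.card_coe_set_eq]
    exact_mod_cast Set.ncard_le_ncard (fun n hn => hst.trans_lt hn)
      (finite_setOf_lt_of_summable hsum hs)

theorem mul_countAbove_le_tsum (hnn : ∀ n, 0 ≤ l n) (hsum : Summable l) {t : ℝ} (ht : 0 < t) :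
    t * countAbove l t ≤ ∑' n, l n := by
  have hfin := finite_setOf_lt_of_summable hsum ht
  rw [countAbove, Nat.card_eq_card_finite_toFinset hfin, mul_comm, ← nsmul_eq_mul]
  calc hfin.toFinset.card • t ≤ ∑ n ∈ hfin.toFinset, l n :=
        Finset.card_nsmul_le_sum _ _ _ fun n hn => (hfin.mem_toFinset.1 hn).le
    _ ≤ ∑' n, l n := hsum.sum_le_tsum _ fun n _ => hnn n

-- No finiteness is needed: for an infinite set both `Nat.card` and the non-summable `tsum` are `0`.
theorem countAbove_mul_eq_tsum_indicator (l : ℕ → ℝ) (g : ℝ → ℝ) (t : ℝ) :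
    countAbove l t * g t = ∑' n, (Iio (l n)).indicator g t := by
  rw [countAbove, ← nsmul_eq_mul, ← tsum_const]
  exact tsum_subtype {n | t < l n} fun _ => g t

theorem integral_countAbove_mul_eq_tsum (hnn : ∀ n, 0 ≤ l n) (hle : ∀ n, l n ≤ 1)
    (hsum : Summable l) {g : ℝ → ℝ} {C : ℝ} (hg : IntegrableOn g (Ioc 0 1))
    (hgC : ∀ t ∈ Ioc (0:ℝ) 1, ‖g t‖ ≤ C) :
    ∫ t in Ioc 0 1, countAbove l t * g t = ∑' n, ∫ t in 0..l n, g t := by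
  have hint n : Integrable ((Iio (l n)).indicator g) (volume.restrict (Ioc 0 1)) :=
    hg.indicator measurableSet_Iio
  have hnorm n : ∫ t in Ioc 0 1, ‖(Iio (l n)).indicator g t‖ ≤ C * l n := by
    simp_rw [norm_indicator_eq_indicator_norm]
    rw [setIntegral_Ioc_indicator_Iio (hnn n) (hle n)]
    calc ∫ t in 0..l n, ‖g t‖ ≤ ‖∫ t in 0..l n, ‖g t‖‖ := Real.le_norm_self _
      _ ≤ C * |l n - 0| := intervalIntegral.norm_integral_le_of_norm_le_const fun t ht => by
          rw [uIoc_of_le (hnn n)] at ht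
          simpa using hgC t ⟨ht.1, ht.2.trans (hle n)⟩
      _ = C * l n := by rw [sub_zero, abs_of_nonneg (hnn n)]
  have hsumm : Summable fun n => ∫ t in Ioc 0 1, ‖(Iio (l n)).indicator g t‖ :=
    .of_nonneg_of_le (fun n => integral_nonneg fun _ => norm_nonneg _) hnorm (hsum.mul_left C)
  simp_rw [countAbove_mul_eq_tsum_indicator, ← integral_tsum_of_summable_integral_norm hint hsumm,
    setIntegral_Ioc_indicator_Iio (hnn _) (hle _)]

theorem integrableOn_countAbove_mul_div (hnn : ∀ n, 0 ≤ l n) (hsum : Summable l) {u : ℝ}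
    (hu : 0 ≤ u) : IntegrableOn (fun t => countAbove l t * t / (1 + 2 * u * t) ^ 2) (Ioc 0 1) := by
  have hN : AEMeasurable (countAbove l) (volume.restrict (Ioc 0 1)) :=
    aemeasurable_restrict_of_antitoneOn measurableSet_Ioc
      ((countAbove_antitoneOn hsum).mono Ioc_subset_Ioi_self)
  refine .of_bound (by simp) ((hN.mul aemeasurable_id).div (by fun_prop)).aestronglyMeasurable
    (∑' n, l n) ?_
  filter_upwards [ae_restrict_mem measurableSet_Ioc] with t ht
  have hden : 1 ≤ (1 + 2 * u * t) ^ 2 := one_le_pow₀ (by nlinarith [ht.1])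
  have hnum : 0 ≤ countAbove l t * t := mul_nonneg (countAbove_nonneg l t) ht.1.le
  rw [Real.norm_of_nonneg (div_nonneg hnum (by positivity))]
  calc countAbove l t * t / (1 + 2 * u * t) ^ 2 ≤ t * countAbove l t :=
        (div_le_self hnum hden).trans_eq (mul_comm _ _)
    _ ≤ ∑' n, l n := mul_countAbove_le_tsum hnn hsum ht.1

end CountAbove

theorem neg_two_mul_sq_mul_integral_div_sq {u a : ℝ} (hu : 0 ≤ u) (ha : 0 ≤ a) :
    -(2 * u ^ 2) * ∫ t in 0..a, t / (1 + 2 * u * t) ^ 2 =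
      u * a / (1 + 2 * u * a) - 1 / 2 * Real.log (1 + 2 * u * a) := by
  have hne : ∀ t ∈ uIcc 0 a, 1 + 2 * u * t ≠ 0 := fun t ht => by
    rw [uIcc_of_le ha] at ht
    nlinarith [ht.1, mul_nonneg hu ht.1]
  have hderiv : ∀ t ∈ uIcc 0 a,
      HasDerivAt (fun t => u * t / (1 + 2 * u * t) - 1 / 2 * Real.log (1 + 2 * u * t))
        (-(2 * u ^ 2) * (t / (1 + 2 * u * t) ^ 2)) t := fun t ht => by
    have hlin : HasDerivAt (fun t => 1 + 2 * u * t) (2 * u) t := by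
      simpa using ((hasDerivAt_id t).const_mul (2 * u)).const_add 1
    have hmul : HasDerivAt (fun t => u * t) u t := by simpa using (hasDerivAt_id t).const_mul u
    refine ((hmul.div hlin (hne t ht)).sub
      ((hlin.log (hne t ht)).const_mul (1 / 2))).congr_deriv ?_
    field_simp
    ring
  have hint : IntervalIntegrable (fun t => -(2 * u ^ 2) * (t / (1 + 2 * u * t) ^ 2)) volume 0 a :=
    (continuousOn_const.mul (continuousOn_id.div (by fun_prop)
      fun t ht => pow_ne_zero _ (hne t ht))).intervalIntegrable
  rw [← intervalIntegral.integral_const_mul,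
    intervalIntegral.integral_eq_sub_of_hasDerivAt hderiv hint]
  simp

theorem integral_comp_div_mul_div_sq (φ : ℝ → ℝ) {u : ℝ} (hu : 0 < u) :
    ∫ t in 0..1, φ (t / u) * t / (1 + 2 * t) ^ 2 =
      u ^ 2 * ∫ s in 0..1 / u, φ s * s / (1 + 2 * u * s) ^ 2 := by
  set f := fun s => φ s * s / (1 + 2 * u * s) ^ 2
  calc ∫ t in 0..1, φ (t / u) * t / (1 + 2 * t) ^ 2 = ∫ t in 0..1, u * f (t / u) :=
        intervalIntegral.integral_congr fun t _ => by simp only [f]; field_simp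
    _ = u ^ 2 * ∫ s in 0..1 / u, f s := by
        rw [intervalIntegral.integral_const_mul, intervalIntegral.integral_comp_div f hu.ne',
          zero_div, smul_eq_mul, ← mul_assoc, sq]

section LogLaplace

variable {l : ℕ → ℝ} {u : ℝ}

theorem logLaplace_sub_mul_logLaplaceDeriv (hnn : ∀ n, 0 ≤ l n) (hle : ∀ n, l n ≤ 1)
    (hsum : Summable l) (hu : 0 ≤ u) :
    logLaplace l u - u * logLaplaceDeriv l u =
      -(2 * u ^ 2) * ∫ t in 0..1, countAbove l t * t / (1 + 2 * u * t) ^ 2 := by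
  have hden n : 1 ≤ 1 + 2 * u * l n := by nlinarith [mul_nonneg hu (hnn n)]
  have hlog : Summable fun n => Real.log (1 + 2 * u * l n) :=
    .of_nonneg_of_le (fun n => Real.log_nonneg (hden n))
      (fun n => by linarith [Real.log_le_sub_one_of_pos (zero_lt_one.trans_le (hden n))])
      (hsum.mul_left (2 * u))
  have hdiv : Summable fun n => l n / (1 + 2 * u * l n) :=
    .of_nonneg_of_le (fun n => div_nonneg (hnn n) (zero_le_one.trans (hden n)))
      (fun n => div_le_self (hnn n) (hden n)) hsum
  have hg : IntegrableOn (fun t => t / (1 + 2 * u * t) ^ 2) (Ioc 0 1) :=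
    (ContinuousOn.integrableOn_Icc (continuousOn_id.div (by fun_prop)
      fun t ht => by nlinarith [ht.1, mul_nonneg hu ht.1])).mono_set Ioc_subset_Icc_self
  have hgC : ∀ t ∈ Ioc (0:ℝ) 1, ‖t / (1 + 2 * u * t) ^ 2‖ ≤ 1 := fun t ht => by
    have hden : 1 ≤ (1 + 2 * u * t) ^ 2 := one_le_pow₀ (by nlinarith [mul_nonneg hu ht.1.le])
    rw [Real.norm_of_nonneg (div_nonneg ht.1.le (by positivity))]
    exact (div_le_self ht.1.le hden).trans ht.2
  calc logLaplace l u - u * logLaplaceDeriv l u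
      = ∑' n, (u * l n / (1 + 2 * u * l n) - 1 / 2 * Real.log (1 + 2 * u * l n)) := by
        simp only [logLaplace, logLaplaceDeriv, mul_div_assoc]
        rw [(hdiv.mul_left u).tsum_sub (hlog.mul_left _), tsum_mul_left, tsum_mul_left]
        ring
    _ = ∑' n, -(2 * u ^ 2) * ∫ t in 0..l n, t / (1 + 2 * u * t) ^ 2 :=
        tsum_congr fun n => (neg_two_mul_sq_mul_integral_div_sq hu (hnn n)).symm
    _ = -(2 * u ^ 2) * ∫ t in 0..1, countAbove l t * t / (1 + 2 * u * t) ^ 2 := by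
        simp_rw [tsum_mul_left, intervalIntegral.integral_of_le zero_le_one, mul_div_assoc,
          integral_countAbove_mul_eq_tsum hnn hle hsum hg hgC]

theorem two_mul_integral_comp_div_le_abs (hnn : ∀ n, 0 ≤ l n) (hle : ∀ n, l n ≤ 1)
    (hsum : Summable l) (hu : 1 ≤ u) :
    2 * ∫ t in 0..1, countAbove l (t / u) * t / (1 + 2 * t) ^ 2 ≤
      |logLaplace l u - u * logLaplaceDeriv l u| := by
  have hu0 : 0 < u := zero_lt_one.trans_le hu
  have hF_nonneg : ∀ t ∈ Ioc (0:ℝ) 1, 0 ≤ countAbove l t * t / (1 + 2 * u * t) ^ 2 :=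
    fun t ht => div_nonneg (mul_nonneg (countAbove_nonneg l t) ht.1.le) (sq_nonneg _)
  rw [logLaplace_sub_mul_logLaplaceDeriv hnn hle hsum hu0.le, abs_mul, abs_neg,
    abs_of_nonneg (by positivity), abs_of_nonneg (intervalIntegral.integral_nonneg zero_le_one
      fun t ht => div_nonneg (mul_nonneg (countAbove_nonneg l t) ht.1) (sq_nonneg _)),
    integral_comp_div_mul_div_sq _ hu0, ← mul_assoc]
  gcongr
  rw [intervalIntegral.integral_of_le (by positivity), intervalIntegral.integral_of_le zero_le_one]
  exact setIntegral_mono_set (integrableOn_countAbove_mul_div hnn hsum hu0.le)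
    ((ae_restrict_mem measurableSet_Ioc).mono hF_nonneg)
    (Ioc_subset_Ioc_right ((div_le_one hu0).2 hu)).eventuallyLE

theorem countAbove_mul_integral_le_integral_comp_div (hnn : ∀ n, 0 ≤ l n) (hsum : Summable l)
    (hu : 1 ≤ u) :
    countAbove l (1 / u) * ∫ t in 0..1, t / (1 + 2 * t) ^ 2 ≤
      ∫ t in 0..1, countAbove l (t / u) * t / (1 + 2 * t) ^ 2 := by
  have hu0 : 0 < u := zero_lt_one.trans_le hu
  have hinv : 0 < 1 / u := by positivity
  have hconst : IntervalIntegrable (fun s => countAbove l (1 / u) * s / (1 + 2 * u * s) ^ 2)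
      volume 0 (1 / u) :=
    ((continuousOn_const.mul continuousOn_id).div (by fun_prop) fun s hs => by
      rw [uIcc_of_le hinv.le] at hs
      nlinarith [mul_nonneg hu0.le hs.1]).intervalIntegrable
  have hF : IntervalIntegrable (fun s => countAbove l s * s / (1 + 2 * u * s) ^ 2)
      volume 0 (1 / u) := by
    rw [intervalIntegrable_iff_integrableOn_Ioc_of_le hinv.le]
    exact (integrableOn_countAbove_mul_div hnn hsum hu0.le).mono_set
      (Ioc_subset_Ioc_right ((div_le_one hu0).2 hu))
  calc countAbove l (1 / u) * ∫ t in 0..1, t / (1 + 2 * t) ^ 2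
      = ∫ t in 0..1, (fun _ => countAbove l (1 / u)) (t / u) * t / (1 + 2 * t) ^ 2 := by
        simp_rw [← intervalIntegral.integral_const_mul, mul_div_assoc]
    _ = u ^ 2 * ∫ s in 0..1 / u, countAbove l (1 / u) * s / (1 + 2 * u * s) ^ 2 :=
        integral_comp_div_mul_div_sq (fun _ => countAbove l (1 / u)) hu0
    _ ≤ u ^ 2 * ∫ s in 0..1 / u, countAbove l s * s / (1 + 2 * u * s) ^ 2 := by
        refine mul_le_mul_of_nonneg_left (intervalIntegral.integral_mono_on_of_le_Ioo hinv.le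
          hconst hF fun s hs => ?_) (sq_nonneg u)
        exact div_le_div_of_nonneg_right (mul_le_mul_of_nonneg_right
          (countAbove_antitoneOn hsum hs.1 hinv hs.2.le) hs.1.le) (sq_nonneg _)
    _ = ∫ t in 0..1, countAbove l (t / u) * t / (1 + 2 * t) ^ 2 :=
        (integral_comp_div_mul_div_sq _ hu0).symm

end LogLaplace

/-- For (λ_n) positive summable with λ_n ≤ 1, counting function N(t) = #{n : λ_n > t} → ∞
as t → 0+, and L(u) = -(1/2) Σ ln(1+2uλ_n), L'(u) = -Σ λ_n/(1+2uλ_n):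
L(u) - u L'(u) = -2u² ∫₀^1 N(λ)λ(1+2uλ)⁻² dλ, with the stated lower bound and divergence. -/
theorem L_minus_uL'_identity_and_divergence
    (l : ℕ → ℝ) (hpos : ∀ n, 0 < l n) (hle : ∀ n, l n ≤ 1) (hsum : Summable l)
    (N : ℝ → ℝ) (hN : ∀ t, N t = (Nat.card {n : ℕ | t < l n} : ℝ))
    (hNinf : Tendsto N (nhdsWithin 0 (Ioi 0)) atTop)
    (L L' : ℝ → ℝ)
    (hL : ∀ u, L u = -(1/2) * ∑' n, Real.log (1 + 2 * u * l n))
    (hL' : ∀ u, L' u = -∑' n, l n / (1 + 2 * u * l n)) :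
    (∀ u > (0:ℝ), L u - u * L' u =
        -(2 * u ^ 2) * ∫ t in (0:ℝ)..1, N t * t / (1 + 2 * u * t) ^ 2) ∧
    (∀ u ≥ (1:ℝ), 2 * (∫ t in (0:ℝ)..1, N (t / u) * t / (1 + 2 * t) ^ 2)
        ≤ |L u - u * L' u|) ∧
    Tendsto (fun u => 2 * ∫ t in (0:ℝ)..1, N (t / u) * t / (1 + 2 * t) ^ 2)
      atTop atTop := by
  obtain rfl : N = countAbove l := funext hN
  obtain rfl : L = logLaplace l := funext hL
  obtain rfl : L' = logLaplaceDeriv l := funext hL'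
  have hnn n : 0 ≤ l n := (hpos n).le
  refine ⟨fun u hu => logLaplace_sub_mul_logLaplaceDeriv hnn hle hsum hu.le,
    fun u hu => two_mul_integral_comp_div_le_abs hnn hle hsum hu, ?_⟩
  have hc : 0 < ∫ t in (0:ℝ)..1, t / (1 + 2 * t) ^ 2 :=
    intervalIntegral.intervalIntegral_pos_of_pos_on
      (continuousOn_id.div (by fun_prop) fun t ht => by
        rw [uIcc_of_le zero_le_one] at ht
        nlinarith [ht.1]).intervalIntegrable
      (fun t ht => div_pos ht.1 (pow_pos (by linarith [ht.1]) 2)) zero_lt_one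
  have hinv : Tendsto (fun u : ℝ => 1 / u) atTop (nhdsWithin 0 (Ioi 0)) := by
    simpa only [one_div] using tendsto_inv_atTop_nhdsGT_zero
  refine tendsto_atTop_mono' _ ?_ (((hNinf.comp hinv).atTop_mul_const hc).const_mul_atTop two_pos)
  filter_upwards [eventually_ge_atTop 1] with u hu
  exact mul_le_mul_of_nonneg_left (countAbove_mul_integral_le_integral_comp_div hnn hsum hu)
    zero_le_two
end

section
/- Let φ be slowly varying at 0, positive, and such that for some p ∈ (0,1) the function t ↦ t^p φ(t) is eventually increasing near 0. Then as u → ∞, ∫₀^1 φ(λ)(1+2uλ)^{-2} dλ ~ φ(1/u)/(2u). -/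
open Filter MeasureTheory Set Topology

/-!
Substituting `t = s / u`, the quotient equals `2 ∫₀^u (φ (s/u) / φ (1/u)) (1 + 2s)⁻² ds`.
On `s ≤ εu` the ratio `φ (s/u) / φ (1/u)` tends to `1` pointwise and, by Potter-type bounds, is
dominated by `s^(-p) + C √s`: for `s ≤ 1` this is the monotonicity of `t^p φ(t)`, for `s ≥ 1`
iterate `φ (2t) ≤ √2 φ(t)` along dyadic steps. Dominated convergence gives the limit
`2 ∫₀^∞ (1 + 2s)⁻² ds = 1`. The range `t ∈ [ε, 1]` contributes `O(1 / (u φ (1/u)))`, and the same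
Potter bound gives `u φ (1/u) ≳ √u → ∞`.
-/

section SlowVariation

variable {φ : ℝ → ℝ}

lemma exists_forall_Ioc_apply_two_mul_le {a : ℝ} (ha : 1 < a) (hpos : ∀ᶠ t in 𝓝[>] 0, 0 < φ t)
    (h2 : Tendsto (fun t => φ (2 * t) / φ t) (𝓝[>] 0) (𝓝 1)) :
    ∃ τ > 0, ∀ t ∈ Ioc 0 τ, φ (2 * t) ≤ a * φ t := by
  have h : ∀ᶠ t in 𝓝[>] (0:ℝ), φ (2 * t) ≤ a * φ t := by
    filter_upwards [hpos, h2.eventually (eventually_le_nhds ha)] with t ht hle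
    exact (div_le_iff₀ ht).mp hle
  exact mem_nhdsGT_iff_exists_Ioc_subset.mp h

lemma apply_two_pow_succ_mul_le {a τ : ℝ} (ha : 0 ≤ a)
    (hτ : ∀ t ∈ Ioc 0 τ, φ (2 * t) ≤ a * φ t) {t : ℝ} (ht : 0 < t) :
    ∀ n : ℕ, 2 ^ n * t ≤ τ → φ (2 ^ (n + 1) * t) ≤ a ^ (n + 1) * φ t
  | 0, h => by simpa using hτ t ⟨ht, by simpa using h⟩
  | n + 1, h => by
    have hn : 2 ^ n * t ≤ τ := by
      refine le_trans ?_ h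
      rw [pow_succ]
      nlinarith [pow_pos (two_pos (α := ℝ)) n]
    calc φ (2 ^ (n + 1 + 1) * t) = φ (2 * (2 ^ (n + 1) * t)) := by ring_nf
      _ ≤ a * φ (2 ^ (n + 1) * t) := hτ _ ⟨by positivity, h⟩
      _ ≤ a * (a ^ (n + 1) * φ t) := by gcongr; exact apply_two_pow_succ_mul_le ha hτ ht n hn
      _ = a ^ (n + 1 + 1) * φ t := by ring

lemma apply_le_div_rpow_mul_of_monotoneOn {p δ : ℝ}
    (hmono : MonotoneOn (fun t => t ^ p * φ t) (Ioc 0 δ)) {x y : ℝ} (hx : 0 < x) (hxy : x ≤ y)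
    (hy : y ≤ δ) : φ x ≤ (y / x) ^ p * φ y := by
  have hy0 : 0 < y := hx.trans_le hxy
  have h := hmono ⟨hx, hxy.trans hy⟩ ⟨hy0, hy⟩ hxy
  rw [Real.div_rpow hy0.le hx.le, div_mul_eq_mul_div, le_div_iff₀ (Real.rpow_pos_of_pos hx p)]
  simpa only [mul_comm] using h

lemma exists_apply_le_mul_sqrt_div_mul {p δ : ℝ} (hp : 0 ≤ p) (hδ : 0 < δ)
    (hpos : ∀ t ∈ Ioc 0 δ, 0 < φ t)
    (h2 : Tendsto (fun t => φ (2 * t) / φ t) (𝓝[>] 0) (𝓝 1))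
    (hmono : MonotoneOn (fun t => t ^ p * φ t) (Ioc 0 δ)) :
    ∃ C ε, 0 < C ∧ 0 < ε ∧ ε ≤ δ ∧
      ∀ x y, 0 < x → x ≤ y → y ≤ ε → φ y ≤ C * √(y / x) * φ x := by
  obtain ⟨τ, hτ, hdouble⟩ := exists_forall_Ioc_apply_two_mul_le Real.one_lt_sqrt_two
    (by filter_upwards [Ioc_mem_nhdsGT hδ] with t ht using hpos t ht) h2
  refine ⟨2 ^ p * √2, min τ (δ / 2), by positivity, by positivity,
    (min_le_right _ _).trans (by linarith), fun x y hx hxy hy => ?_⟩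
  obtain ⟨n, hn, hn'⟩ := exists_nat_pow_near ((one_le_div hx).mpr hxy) one_lt_two
  rw [le_div_iff₀ hx] at hn
  rw [div_lt_iff₀ hx] at hn'
  have hy0 : 0 < y := hx.trans_le hxy
  have hz : 2 ^ (n + 1) * x ≤ 2 * y := by rw [pow_succ]; nlinarith
  have hzδ : 2 ^ (n + 1) * x ≤ δ := by linarith [min_le_right τ (δ / 2)]
  have hroot : √2 ^ (n + 1) ≤ √2 * √(y / x) := by
    rw [pow_succ']
    gcongr
    rw [Real.le_sqrt (by positivity) (by positivity), ← pow_mul, mul_comm, pow_mul,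
      Real.sq_sqrt zero_le_two, le_div_iff₀ hx]
    exact hn
  calc φ y ≤ (2 ^ (n + 1) * x / y) ^ p * φ (2 ^ (n + 1) * x) :=
        apply_le_div_rpow_mul_of_monotoneOn hmono hy0 hn'.le hzδ
    _ ≤ 2 ^ p * φ (2 ^ (n + 1) * x) := by
        have := hpos _ ⟨by positivity, hzδ⟩
        gcongr
        rw [div_le_iff₀ hy0]; exact hz
    _ ≤ 2 ^ p * (√2 ^ (n + 1) * φ x) := by
        gcongr
        exact apply_two_pow_succ_mul_le (by positivity) hdouble hx n
          (hn.trans (hy.trans (min_le_left _ _)))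
    _ ≤ 2 ^ p * (√2 * √(y / x) * φ x) := by
        have := hpos x ⟨hx, by linarith [min_le_right τ (δ / 2)]⟩
        gcongr
    _ = 2 ^ p * √2 * √(y / x) * φ x := by ring

lemma tendsto_mul_apply_one_div_atTop {C ε : ℝ} (hC : 0 < C) (hε : 0 < ε) (hφε : 0 < φ ε)
    (hpotter : ∀ x y, 0 < x → x ≤ y → y ≤ ε → φ y ≤ C * √(y / x) * φ x) :
    Tendsto (fun u => u * φ (1 / u)) atTop atTop := by
  have hsqrt : Tendsto (fun u => φ ε / (C * √ε) * √u) atTop atTop :=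
    Real.tendsto_sqrt_atTop.const_mul_atTop (by positivity)
  refine tendsto_atTop_mono' atTop ?_ hsqrt
  filter_upwards [eventually_ge_atTop ε⁻¹] with u hu
  have hu0 : 0 < u := (inv_pos.mpr hε).trans_le hu
  have h := hpotter (1 / u) ε (by positivity) (by rwa [one_div, inv_le_comm₀ hu0 hε]) le_rfl
  rw [div_div_eq_mul_div, div_one, Real.sqrt_mul hε.le] at h
  rw [div_mul_eq_mul_div, div_le_iff₀ (by positivity)]
  calc φ ε * √u ≤ C * (√ε * √u) * φ (1 / u) * √u := by gcongr
    _ = u * φ (1 / u) * (C * √ε) := by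
        linear_combination (C * √ε * φ (1 / u)) * Real.mul_self_sqrt hu0.le

lemma abs_apply_div_div_apply_one_div_le {p δ C ε : ℝ} (hC : 0 ≤ C) (hε : 0 < ε) (hεδ : ε ≤ δ)
    (hpos : ∀ t ∈ Ioc 0 δ, 0 < φ t) (hmono : MonotoneOn (fun t => t ^ p * φ t) (Ioc 0 δ))
    (hpotter : ∀ x y, 0 < x → x ≤ y → y ≤ ε → φ y ≤ C * √(y / x) * φ x) {u s : ℝ}
    (hu : ε⁻¹ ≤ u) (hs : s ∈ Ioc 0 (ε * u)) : |φ (s / u) / φ (1 / u)| ≤ s ^ (-p) + C * √s := by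
  obtain ⟨hs0, hsε⟩ := hs
  have hu0 : 0 < u := (inv_pos.mpr hε).trans_le hu
  have hsu : s / u ≤ ε := by rwa [div_le_iff₀ hu0]
  have hu' : 1 / u ≤ ε := by rwa [one_div, inv_le_comm₀ hu0 hε]
  have hφu := hpos (1 / u) ⟨by positivity, hu'.trans hεδ⟩
  have hφsu := hpos (s / u) ⟨by positivity, hsu.trans hεδ⟩
  rw [abs_of_pos (div_pos hφsu hφu), div_le_iff₀ hφu]
  have hCs : 0 ≤ C * √s := by positivity
  rcases le_total s 1 with hs1 | hs1
  · have h := apply_le_div_rpow_mul_of_monotoneOn hmono (by positivity)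
      (div_le_div_of_nonneg_right hs1 hu0.le) (hu'.trans hεδ)
    rw [div_div_div_cancel_right₀ hu0.ne', one_div, Real.inv_rpow hs0.le,
      ← Real.rpow_neg hs0.le] at h
    nlinarith
  · have h := hpotter (1 / u) (s / u) (by positivity) (div_le_div_of_nonneg_right hs1 hu0.le) hsu
    rw [div_div_div_cancel_right₀ hu0.ne', div_one] at h
    nlinarith [Real.rpow_nonneg hs0.le (-p)]

end SlowVariation

lemma integral_Ioi_one_div_one_add_two_mul_sq : ∫ s in Ioi (0:ℝ), 1 / (1 + 2 * s) ^ 2 = 1 / 2 := by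
  have hderiv : ∀ s ∈ Ici (0:ℝ),
      HasDerivAt (fun s => -(1 + 2 * s)⁻¹ / 2) (1 / (1 + 2 * s) ^ 2) s := by
    intro s hs
    have hne : 1 + 2 * s ≠ 0 := by linarith [mem_Ici.mp hs]
    refine (((hasDerivAt_id s).const_mul 2).const_add 1).inv hne |>.neg.div_const 2
      |>.congr_deriv ?_
    simp only [id]
    field_simp
  have hlim : Tendsto (fun s : ℝ => -(1 + 2 * s)⁻¹ / 2) atTop (𝓝 0) := by
    have h : Tendsto (fun s : ℝ => 1 + 2 * s) atTop atTop :=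
      tendsto_atTop_add_const_left _ 1 (tendsto_id.const_mul_atTop two_pos)
    simpa using (tendsto_inv_atTop_zero.comp h).neg.div_const 2
  rw [integral_Ioi_of_hasDerivAt_of_nonneg' hderiv (fun s _ => by positivity) hlim]
  norm_num

lemma integrableOn_rpow_div_one_add_two_mul_sq {a : ℝ} (ha : |a| < 1) :
    IntegrableOn (fun s : ℝ => s ^ a / (1 + 2 * s) ^ 2) (Ioi 0) := by
  obtain ⟨ha₁, ha₂⟩ := abs_lt.mp ha
  have hmeas : AEStronglyMeasurable (fun s : ℝ => s ^ a / (1 + 2 * s) ^ 2) volume :=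
    (by measurability : Measurable _).aestronglyMeasurable
  rw [← Ioc_union_Ioi_eq_Ioi zero_le_one]
  refine IntegrableOn.union ?_ ?_
  · refine (intervalIntegral.intervalIntegrable_rpow' ha₁).1.mono' hmeas.restrict ?_
    filter_upwards [ae_restrict_mem measurableSet_Ioc] with s ⟨hs0, _⟩
    rw [Real.norm_of_nonneg (by positivity)]
    exact div_le_self (by positivity) (one_le_pow₀ (by linarith))
  · refine (integrableOn_Ioi_rpow_of_lt (by linarith : a - 2 < -1) one_pos).mono' hmeas.restrict ?_
    filter_upwards [ae_restrict_mem measurableSet_Ioi] with s (hs : 1 < s)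
    have hs0 : 0 < s := by linarith
    rw [Real.norm_of_nonneg (by positivity), Real.rpow_sub hs0, Real.rpow_two]
    gcongr
    linarith

lemma integrableOn_rpow_neg_add_mul_sqrt_div_one_add_two_mul_sq {p : ℝ} (hp : |p| < 1) (C : ℝ) :
    IntegrableOn (fun s : ℝ => (s ^ (-p) + C * √s) / (1 + 2 * s) ^ 2) (Ioi 0) := by
  refine ((integrableOn_rpow_div_one_add_two_mul_sq (a := -p) (by rwa [abs_neg])).add
    ((integrableOn_rpow_div_one_add_two_mul_sq (a := 1 / 2) (by norm_num)).const_mul C)).congr_fun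
    (fun s _ => ?_) measurableSet_Ioi
  rw [Pi.add_apply, Real.sqrt_eq_rpow, add_div, mul_div_assoc]

lemma IntervalIntegrable.div_one_add_mul_sq {f : ℝ → ℝ} {a b c : ℝ} (ha : 0 ≤ a) (hb : 0 ≤ b)
    (hc : 0 ≤ c) (hf : IntervalIntegrable f volume a b) :
    IntervalIntegrable (fun t => f t / (1 + c * t) ^ 2) volume a b := by
  simp only [div_eq_mul_inv]
  refine hf.mul_continuousOn (ContinuousOn.inv₀ (by fun_prop) fun t ht => ?_)
  have : 0 ≤ t := (le_min ha hb).trans ht.1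
  positivity

section Rescaling

variable {φ : ℝ → ℝ}

lemma setIntegral_indicator_rescaled {u a : ℝ} (hu : 0 < u) (ha : 0 ≤ a) :
    ∫ s in Ioi 0, (Ioc 0 (a * u)).indicator (fun s => φ (s / u) / φ (1 / u) / (1 + 2 * s) ^ 2) s
      = u / φ (1 / u) * ∫ t in 0..a, φ t / (1 + 2 * u * t) ^ 2 := by
  rw [integral_indicator measurableSet_Ioc, Measure.restrict_restrict measurableSet_Ioc,
    inter_eq_self_of_subset_left Ioc_subset_Ioi_self,
    ← intervalIntegral.integral_of_le (by positivity)]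
  set f : ℝ → ℝ := fun t => φ t / (1 + 2 * u * t) ^ 2 / φ (1 / u)
  have h : (fun s => φ (s / u) / φ (1 / u) / (1 + 2 * s) ^ 2) = fun s => f (s / u) := by
    ext s
    simp only [f]
    rw [show 2 * u * (s / u) = 2 * s by field_simp, div_right_comm]
  rw [h, intervalIntegral.integral_comp_div f hu.ne', zero_div, mul_div_cancel_right₀ _ hu.ne',
    intervalIntegral.integral_div, smul_eq_mul]
  ring

lemma tendsto_setIntegral_indicator_rescaled {g : ℝ → ℝ} {ε : ℝ} (hε : 0 < ε)
    (hint : IntervalIntegrable φ volume 0 ε)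
    (hsv : ∀ c > (0:ℝ), Tendsto (fun t => φ (c * t) / φ t) (𝓝[>] 0) (𝓝 1))
    (hg : IntegrableOn (fun s => g s / (1 + 2 * s) ^ 2) (Ioi 0))
    (hbound : ∀ᶠ u in atTop, ∀ s ∈ Ioc 0 (ε * u), |φ (s / u) / φ (1 / u)| ≤ g s) :
    Tendsto (fun u => ∫ s in Ioi 0, (Ioc 0 (ε * u)).indicator
      (fun s => φ (s / u) / φ (1 / u) / (1 + 2 * s) ^ 2) s) atTop (𝓝 (1 / 2)) := by
  rw [← integral_Ioi_one_div_one_add_two_mul_sq]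
  refine tendsto_integral_filter_of_dominated_convergence (fun s => ‖g s / (1 + 2 * s) ^ 2‖)
    ?_ ?_ hg.norm ?_
  · filter_upwards [eventually_gt_atTop 0] with u hu
    have h : IntervalIntegrable (fun s => φ (s / u)) volume 0 (ε * u) := by
      simpa [div_eq_mul_inv] using hint.comp_mul_right (c := u⁻¹)
    exact (((h.div_const (φ (1 / u))).div_one_add_mul_sq le_rfl (by positivity) zero_le_two).1
      |>.integrable_indicator measurableSet_Ioc).aestronglyMeasurable.restrict
  · filter_upwards [hbound] with u hu
    filter_upwards [ae_restrict_mem measurableSet_Ioi] with s (hs : 0 < s)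
    by_cases hmem : s ∈ Ioc 0 (ε * u)
    · rw [indicator_of_mem hmem, norm_div (φ (s / u) / φ (1 / u)), norm_div (g s),
        Real.norm_eq_abs, Real.norm_eq_abs]
      exact div_le_div_of_nonneg_right ((hu s hmem).trans (le_abs_self _)) (abs_nonneg _)
    · rw [indicator_of_notMem hmem, norm_zero]
      positivity
  · filter_upwards [ae_restrict_mem measurableSet_Ioi] with s (hs : 0 < s)
    have hlim := ((hsv s hs).comp tendsto_inv_atTop_nhdsGT_zero).div_const ((1 + 2 * s) ^ 2)
    refine hlim.congr' ?_
    filter_upwards [eventually_ge_atTop (s / ε)] with u hu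
    rw [indicator_of_mem (show s ∈ Ioc 0 (ε * u) from ⟨hs, by rwa [div_le_iff₀' hε] at hu⟩)]
    simp [div_eq_mul_inv]

lemma tendsto_mul_integral_tail {ε : ℝ} (hε : 0 < ε) (hε1 : ε ≤ 1)
    (hnn : ∀ t ∈ Icc ε 1, 0 ≤ φ t) (hint : IntervalIntegrable φ volume ε 1)
    (hgrowth : Tendsto (fun u => u * φ (1 / u)) atTop atTop) :
    Tendsto (fun u => u / φ (1 / u) * ∫ t in ε..1, φ t / (1 + 2 * u * t) ^ 2) atTop (𝓝 0) := by
  set B := ∫ t in ε..1, φ t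
  have hdecay : Tendsto (fun u => B / (4 * ε ^ 2) * (u * φ (1 / u))⁻¹) atTop (𝓝 0) := by
    simpa using hgrowth.inv_tendsto_atTop.const_mul (B / (4 * ε ^ 2))
  refine tendsto_of_tendsto_of_tendsto_of_le_of_le' tendsto_const_nhds hdecay ?_ ?_
  all_goals filter_upwards [eventually_gt_atTop 0, hgrowth.eventually_gt_atTop 0] with u hu hφ
  all_goals have hφ : 0 < φ (1 / u) := pos_of_mul_pos_right hφ hu.le
  · exact mul_nonneg (div_nonneg hu.le hφ.le) (intervalIntegral.integral_nonneg hε1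
      fun t ht => div_nonneg (hnn t ht) (sq_nonneg _))
  · have hI : ∫ t in ε..1, φ t / (1 + 2 * u * t) ^ 2 ≤ B / (2 * u * ε) ^ 2 := by
      rw [← intervalIntegral.integral_div]
      refine intervalIntegral.integral_mono_on hε1
        (hint.div_one_add_mul_sq hε.le zero_le_one (by positivity)) (hint.div_const _)
        fun t ht => ?_
      have := hnn t ht
      gcongr
      nlinarith [ht.1]
    calc u / φ (1 / u) * ∫ t in ε..1, φ t / (1 + 2 * u * t) ^ 2
        ≤ u / φ (1 / u) * (B / (2 * u * ε) ^ 2) := by gcongr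
      _ = B / (4 * ε ^ 2) * (u * φ (1 / u))⁻¹ := by field_simp; ring

end Rescaling

/-- For φ slowly varying at 0, positive, with t ↦ t^p φ(t) increasing near 0 for some
p ∈ (0,1): ∫₀^1 φ(λ)(1+2uλ)⁻² dλ ~ φ(1/u)/(2u) as u → ∞. -/
theorem integral_asymptotics_slowly_varying
    (φ : ℝ → ℝ)
    (hpos : ∀ t ∈ Ioc (0:ℝ) 1, 0 < φ t)
    (hsv : ∀ c > (0:ℝ), Tendsto (fun t => φ (c * t) / φ t) (nhdsWithin 0 (Ioi 0)) (nhds 1))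
    (hmaj : ∃ p ∈ Ioo (0:ℝ) 1, ∃ δ > (0:ℝ),
      MonotoneOn (fun t => t ^ p * φ t) (Ioc (0:ℝ) δ))
    (hint : IntervalIntegrable φ volume 0 1) :
    Tendsto (fun u => (∫ t in (0:ℝ)..1, φ t / (1 + 2 * u * t) ^ 2) / (φ (1 / u) / (2 * u)))
      atTop (nhds 1) := by
  obtain ⟨p, hp, δ, hδ, hmono⟩ := hmaj
  have hpos₁ : ∀ t ∈ Ioc 0 (min δ 1), 0 < φ t :=
    fun t ht => hpos t ⟨ht.1, ht.2.trans (min_le_right _ _)⟩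
  have hmono₁ := hmono.mono (Ioc_subset_Ioc_right (min_le_left δ 1))
  obtain ⟨C, ε, hC, hε, hεδ, hpotter⟩ :=
    exists_apply_le_mul_sqrt_div_mul hp.1.le (lt_min hδ one_pos) hpos₁ (hsv 2 two_pos) hmono₁
  have hε1 : ε ≤ 1 := hεδ.trans (min_le_right _ _)
  have hint₀ : IntervalIntegrable φ volume 0 ε :=
    hint.mono_set (uIcc_subset_uIcc left_mem_uIcc (mem_uIcc_of_le hε.le hε1))
  have hint₁ : IntervalIntegrable φ volume ε 1 :=
    hint.mono_set (uIcc_subset_uIcc (mem_uIcc_of_le hε.le hε1) right_mem_uIcc)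
  have hhead := tendsto_setIntegral_indicator_rescaled hε hint₀ hsv
    (integrableOn_rpow_neg_add_mul_sqrt_div_one_add_two_mul_sq
      (by rw [abs_of_pos hp.1]; exact hp.2) C) (by
      filter_upwards [eventually_ge_atTop ε⁻¹] with u hu s hs
      exact abs_apply_div_div_apply_one_div_le hC.le hε hεδ hpos₁ hmono₁ hpotter hu hs)
  have htail := tendsto_mul_integral_tail hε hε1
    (fun t ht => (hpos t ⟨hε.trans_le ht.1, ht.2⟩).le) hint₁
    (tendsto_mul_apply_one_div_atTop hC hε (hpos₁ ε ⟨hε, hεδ⟩) hpotter)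
  refine (((hhead.const_mul 2).add (htail.const_mul 2)).congr' ?_).trans (by norm_num)
  filter_upwards [eventually_gt_atTop 0] with u hu
  rw [setIntegral_indicator_rescaled hu hε.le, ← intervalIntegral.integral_add_adjacent_intervals
    (hint₀.div_one_add_mul_sq le_rfl hε.le (by positivity))
    (hint₁.div_one_add_mul_sq hε.le zero_le_one (by positivity))]
  field_simp
end

section
/- If N(λ) ~ (1/(2−2/α)) · ln(1/λ)/ln ln(1/λ) as λ → 0+ with α > 1, and u(r) satisfies r ~ (1/(4−4/α)) · ln(u)/(u ln ln(u)) as r → 0+ with u(r) → ∞, then u(r) ~ (1/(4−4/α)) · ln(1/r)/(r ln ln(1/r)) as r → 0+. -/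
/-!
Read `s ~ c·u·log log u / log u` on a logarithmic scale: the factor `log log u / log u` is
negligible there, so `log s ~ log u`, and one more logarithm gives `log log s ~ log log u`.
Hence `log log u / log u ~ log log s / log s`, which inverts the relation.
-/

open Filter Set Real Asymptotics

section

variable {ι : Type*} {l : Filter ι} {u s : ι → ℝ}

theorem isEquivalent_log_const_mul_mul_log_log_div_log {c : ℝ} (hc : c ≠ 0)
    (hu : Tendsto u l atTop) :
    (fun x => log (c * u x * (log (log (u x)) / log (u x)))) ~[l] fun x => log (u x) := by
  have hL := tendsto_log_atTop.comp hu
  have hLL := tendsto_log_atTop.comp hL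
  have hLL_o : (fun x => log (log (u x))) =o[l] fun x => log (u x) :=
    isLittleO_log_id_atTop.comp_tendsto hL
  have hLLL_o : (fun x => log (log (log (u x)))) =o[l] fun x => log (u x) :=
    (isLittleO_log_id_atTop.comp_tendsto hLL).trans hLL_o
  have hc_o : (fun _ => log c) =o[l] fun x => log (u x) :=
    isLittleO_const_left.mpr (Or.inr (tendsto_abs_atTop_atTop.comp hL))
  refine (IsEquivalent.refl.add_isLittleO ((hc_o.add hLLL_o).sub hLL_o)).congr_left ?_
  filter_upwards [hu.eventually_gt_atTop 0, hL.eventually_gt_atTop 0,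
    hLL.eventually_gt_atTop 0] with x (hu : 0 < u x) (hL : 0 < log (u x))
    (hLL : 0 < log (log (u x)))
  simp only [Pi.add_apply]
  rw [log_mul (by positivity) (by positivity), log_mul hc hu.ne', log_div hLL.ne' hL.ne']
  ring

theorem isEquivalent_log_log_div_log_of_isEquivalent {c : ℝ} (hc : c ≠ 0)
    (hu : Tendsto u l atTop) (hs : Tendsto s l atTop)
    (h : (fun x => c * u x * (log (log (u x)) / log (u x))) ~[l] s) :
    (fun x => log (log (s x)) / log (s x)) ~[l] fun x => log (log (u x)) / log (u x) := by
  have hL : (fun x => log (s x)) ~[l] fun x => log (u x) :=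
    (h.log hs).symm.trans (isEquivalent_log_const_mul_mul_log_log_div_log hc hu)
  exact (hL.log (tendsto_log_atTop.comp hu)).div hL

theorem tendsto_mul_log_log_div_log_of_tendsto {c : ℝ} (hu : Tendsto u l atTop)
    (hs : Tendsto s l atTop)
    (h : Tendsto (fun x => c * u x / s x * (log (log (u x)) / log (u x))) l (nhds 1)) :
    Tendsto (fun x => c * u x / s x * (log (log (s x)) / log (s x))) l (nhds 1) := by
  rcases eq_or_ne c 0 with rfl | hc
  · simpa using h
  have hequiv : (fun x => c * u x * (log (log (u x)) / log (u x))) ~[l] s :=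
    isEquivalent_of_tendsto_one (h.congr fun x => by simp only [Pi.div_apply]; ring)
  exact (IsEquivalent.refl.mul
    (isEquivalent_log_log_div_log_of_isEquivalent hc hu hs hequiv).symm).tendsto_nhds h

end

theorem u_asymptotics_alpha_gt_one_general
    (α : ℝ)
    (u : ℝ → ℝ)
    (hu : Tendsto u (nhdsWithin 0 (Ioi 0)) atTop)
    (hrel : Tendsto
      (fun r => r * (4 - 4/α) * u r * Real.log (Real.log (u r)) / Real.log (u r))
      (nhdsWithin 0 (Ioi 0)) (nhds 1)) :
    Tendsto
      (fun r => u r * (4 - 4/α) * r * Real.log (Real.log (1/r)) / Real.log (1/r))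
      (nhdsWithin 0 (Ioi 0)) (nhds 1) := by
  have hs : Tendsto (fun r : ℝ => 1 / r) (nhdsWithin 0 (Ioi 0)) atTop := by
    simpa only [one_div] using tendsto_inv_nhdsGT_zero
  convert tendsto_mul_log_log_div_log_of_tendsto (c := 4 - 4 / α) hu hs
    (hrel.congr fun r => by rw [one_div, div_inv_eq_mul]; ring) using 2 with r
  rw [one_div, div_inv_eq_mul]
  ring

/-- For α > 1: if u(r) → ∞ and r(4−4/α)u(r) ln ln u(r)/ln u(r) → 1 as r → 0+, then
u(r)(4−4/α) r ln ln(1/r)/ln(1/r) → 1 as r → 0+. -/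
theorem u_asymptotics_alpha_gt_one
    (α : ℝ) (hα : 1 < α)
    (u : ℝ → ℝ)
    (hu : Tendsto u (nhdsWithin 0 (Ioi 0)) atTop)
    (hrel : Tendsto
      (fun r => r * (4 - 4/α) * u r * Real.log (Real.log (u r)) / Real.log (u r))
      (nhdsWithin 0 (Ioi 0)) (nhds 1)) :
    Tendsto
      (fun r => u r * (4 - 4/α) * r * Real.log (Real.log (1/r)) / Real.log (1/r))
      (nhdsWithin 0 (Ioi 0)) (nhds 1) :=
  u_asymptotics_alpha_gt_one_general α u hu hrel
end
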